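/- arXiv:2601.08184 — 3 statements merged into one kernel-verified Lean document; each statement's English description precedes it below -/
import Mathlib

section
/- Let A and B be symmetric positive semidefinite d×d real matrices and p ≥ 1. Then the Wasserstein-p distance between the centered Gaussian measures N(0,A) and N(0,B) on R^d satisfies W_p(N(0,A), N(0,B)) ≤ C_{p,d} * ‖A - B‖_op^{1/2} for a constant C_{p,d} depending only on p and d. -/
open MeasureTheory
open scoped ENNReal

/-- The Wasserstein-`p` distance between two measures on a normed space, defined as the
infimum over couplings of `(E‖X-Y‖^p)^{1/p}`. -/
noncomputable def wassersteinDist {E : Type*} [NormedAddCommGroup E] [MeasurableSpace E]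
    (p : ℝ) (μ ν : Measure E) : ℝ :=
  sInf {r : ℝ | ∃ γ : Measure (E × E), IsProbabilityMeasure γ ∧
    γ.map Prod.fst = μ ∧ γ.map Prod.snd = ν ∧
    r = (∫ z, ‖z.1 - z.2‖ ^ p ∂γ) ^ (1 / p)}

/-- The standard Gaussian measure `N(0, I_d)` on `R^d`. -/
noncomputable def stdGaussian (d : ℕ) : Measure (EuclideanSpace ℝ (Fin d)) :=
  (Measure.pi fun _ : Fin d => ProbabilityTheory.gaussianReal 0 1).map
    (EuclideanSpace.equiv (Fin d) ℝ).symm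

/-- The centered Gaussian measure `N(0, A)` on `R^d` with positive semidefinite
covariance `A`, realized as the pushforward of the standard Gaussian by `A^{1/2}`. -/
noncomputable def gaussianOf {d : ℕ} {A : Matrix (Fin d) (Fin d) ℝ} (hA : A.PosSemidef) :
    Measure (EuclideanSpace ℝ (Fin d)) :=
  (stdGaussian d).map (Matrix.toEuclideanLin
    ((hA.1.eigenvectorUnitary : Matrix (Fin d) (Fin d) ℝ) *
      Matrix.diagonal ((↑) ∘ (Real.sqrt ·) ∘ hA.1.eigenvalues) *
      (star hA.1.eigenvectorUnitary : Matrix (Fin d) (Fin d) ℝ)))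

/-!
Couple `N(0, A)` and `N(0, B)` as `(A^{1/2} Z, B^{1/2} Z)` with `Z` standard Gaussian. Then
`‖X - Y‖ ≤ ‖A^{1/2} - B^{1/2}‖ ‖Z‖`, so `W_p ≤ ‖A^{1/2} - B^{1/2}‖ (E ‖Z‖^p)^{1/p}`, and Gaussian
measures have finite moments of all orders. The operator-norm Powers–Størmer inequality
`‖S - T‖² ≤ ‖S² - T²‖` for positive `S, T` bounds the first factor by `‖A - B‖^{1/2}`. It suffices
to test it on a unit eigenvector `v` of `S - T`, with eigenvalue `λ ≥ 0` say, where writing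
`S² - T² = S (S - T) + (S - T) T` gives `⟪(S² - T²) v, v⟫ = λ (⟪S v, v⟫ + ⟪T v, v⟫) ≥ λ²`
because `⟪S v, v⟫ - ⟪T v, v⟫ = λ` and `⟪T v, v⟫ ≥ 0`.
-/

open scoped InnerProductSpace MatrixOrder ComplexOrder

namespace ContinuousLinearMap

variable {𝕜 E : Type*} [RCLike 𝕜] [NormedAddCommGroup E] [InnerProductSpace 𝕜 E]

open RCLike in
theorem sq_le_norm_sq_sub_sq_of_apply_eq_smul {S T : E →L[𝕜] E} (hS : S.IsPositive)
    (hT : T.IsPositive) {v : E} (hv : ‖v‖ = 1) {l : ℝ} (hSTv : (S - T) v = (l : 𝕜) • v) :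
    l ^ 2 ≤ ‖S ^ 2 - T ^ 2‖ := by
  wlog hl : 0 ≤ l generalizing S T l
  · have hTSv : (T - S) v = ((-l : ℝ) : 𝕜) • v := by
      rw [← neg_sub, neg_apply, hSTv, ofReal_neg, neg_smul]
    simpa [norm_sub_rev] using this hT hS hTSv (by linarith)
  have hdiff : re ⟪S v, v⟫_𝕜 - re ⟪T v, v⟫_𝕜 = l := by
    rw [← map_sub, ← inner_sub_left, ← sub_apply, hSTv, inner_smul_left, conj_ofReal,
      re_ofReal_mul, inner_self_eq_norm_sq_to_K, hv]
    simp
  have hS_term : re ⟪(S * (S - T)) v, v⟫_𝕜 = l * re ⟪S v, v⟫_𝕜 := by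
    rw [mul_apply_eq_comp, hS.inner_left_eq_inner_right, hSTv, inner_smul_left, conj_ofReal,
      re_ofReal_mul, inner_re_symm]
  have hT_term : re ⟪((S - T) * T) v, v⟫_𝕜 = l * re ⟪T v, v⟫_𝕜 := by
    rw [mul_apply_eq_comp, sub_apply, inner_sub_left, hS.inner_left_eq_inner_right (T v),
      hT.inner_left_eq_inner_right (T v), ← inner_sub_right, ← sub_apply, hSTv,
      inner_smul_right, re_ofReal_mul]
  have hquad : re ⟪(S ^ 2 - T ^ 2) v, v⟫_𝕜 = l * (re ⟪S v, v⟫_𝕜 + re ⟪T v, v⟫_𝕜) := by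
    have : S ^ 2 - T ^ 2 = S * (S - T) + (S - T) * T := by noncomm_ring
    rw [this, add_apply, inner_add_left, map_add, hS_term, hT_term]
    ring
  have hbound : re ⟪(S ^ 2 - T ^ 2) v, v⟫_𝕜 ≤ ‖S ^ 2 - T ^ 2‖ :=
    calc re ⟪(S ^ 2 - T ^ 2) v, v⟫_𝕜 ≤ ‖(S ^ 2 - T ^ 2) v‖ * ‖v‖ :=
          (re_le_norm _).trans (norm_inner_le_norm _ _)
      _ ≤ ‖S ^ 2 - T ^ 2‖ * ‖v‖ * ‖v‖ := by gcongr; exact (S ^ 2 - T ^ 2).le_opNorm v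
      _ = ‖S ^ 2 - T ^ 2‖ := by rw [hv, mul_one, mul_one]
  nlinarith [hS.re_inner_nonneg_left v, hT.re_inner_nonneg_left v]

theorem norm_sq_le_of_forall_eigenvector [FiniteDimensional 𝕜 E] {M : E →L[𝕜] E}
    (hM : (M : E →ₗ[𝕜] E).IsSymmetric) {c : ℝ} (hc : 0 ≤ c)
    (h : ∀ (l : ℝ) (v : E), ‖v‖ = 1 → M v = (l : 𝕜) • v → l ^ 2 ≤ c) : ‖M‖ ^ 2 ≤ c := by
  set e := hM.eigenvectorBasis rfl
  have hMx (x : E) : ‖M x‖ ^ 2 ≤ c * ‖x‖ ^ 2 := by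
    rw [← e.sum_sq_norm_inner_right, ← e.sum_sq_norm_inner_right, Finset.mul_sum]
    gcongr with i
    have hei := hM.apply_eigenvectorBasis rfl i
    rw [← coe_coe, ← hM, hei, inner_smul_left, norm_mul, RCLike.norm_conj, mul_pow,
      RCLike.norm_ofReal, sq_abs]
    gcongr
    exact h _ _ (e.orthonormal.1 i) hei
  have hM_le : ‖M‖ ≤ √c := by
    refine opNorm_le_bound _ (Real.sqrt_nonneg c) fun x ↦ ?_
    rw [← Real.sqrt_sq (norm_nonneg x), ← Real.sqrt_mul hc]
    exact Real.le_sqrt_of_sq_le (hMx x)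
  calc ‖M‖ ^ 2 ≤ √c ^ 2 := by gcongr
    _ = c := Real.sq_sqrt hc

theorem norm_sub_sq_le_norm_sq_sub_sq [FiniteDimensional 𝕜 E] {S T : E →L[𝕜] E}
    (hS : S.IsPositive) (hT : T.IsPositive) : ‖S - T‖ ^ 2 ≤ ‖S ^ 2 - T ^ 2‖ :=
  norm_sq_le_of_forall_eigenvector (hS.isSymmetric.sub hT.isSymmetric) (norm_nonneg _)
    fun _ _ hv hSTv ↦ sq_le_norm_sq_sub_sq_of_apply_eq_smul hS hT hv hSTv

end ContinuousLinearMap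

namespace Matrix

variable {𝕜 n : Type*} [RCLike 𝕜] [Fintype n] [DecidableEq n]

theorem PosSemidef.isPositive_toEuclideanCLM {A : Matrix n n 𝕜} (hA : A.PosSemidef) :
    (toEuclideanCLM (𝕜 := 𝕜) A).IsPositive := by
  rw [← ContinuousLinearMap.isPositive_toLinearMap_iff]
  exact isPositive_toEuclideanLin_iff.mpr hA

theorem norm_toEuclideanCLM_sqrt_sub_sqrt_le {A B : Matrix n n 𝕜} (hA : A.PosSemidef)
    (hB : B.PosSemidef) :
    ‖toEuclideanCLM (𝕜 := 𝕜) (CFC.sqrt A - CFC.sqrt B)‖ ≤ √‖toEuclideanCLM (𝕜 := 𝕜) (A - B)‖ := by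
  have hsqrt {C : Matrix n n 𝕜} : (CFC.sqrt C).PosSemidef :=
    nonneg_iff_posSemidef.mp (CFC.sqrt_nonneg C)
  have hsq {C : Matrix n n 𝕜} (hC : C.PosSemidef) :
      toEuclideanCLM (𝕜 := 𝕜) (CFC.sqrt C) ^ 2 = toEuclideanCLM (𝕜 := 𝕜) C := by
    rw [← map_pow, CFC.sq_sqrt C (nonneg_iff_posSemidef.mpr hC)]
  rw [Real.le_sqrt (norm_nonneg _) (norm_nonneg _), map_sub, map_sub, ← hsq hA, ← hsq hB]
  exact ContinuousLinearMap.norm_sub_sq_le_norm_sq_sub_sq hsqrt.isPositive_toEuclideanCLM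
    hsqrt.isPositive_toEuclideanCLM

theorem PosSemidef.sqrt_eq_unitary_mul_diagonal_mul_star {A : Matrix n n ℝ}
    (hA : A.PosSemidef) :
    CFC.sqrt A = (hA.1.eigenvectorUnitary : Matrix n n ℝ) *
      diagonal ((↑) ∘ (Real.sqrt ·) ∘ hA.1.eigenvalues) *
      (star hA.1.eigenvectorUnitary : Matrix n n ℝ) := by
  rw [CFC.sqrt_eq_real_sqrt A hA.nonneg, cfcₙ_eq_cfc, hA.1.cfc_eq, IsHermitian.cfc,
    Unitary.conjStarAlgAut_apply]
  rfl

end Matrix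

section Coupling

variable {E F : Type*} [NormedAddCommGroup E] [MeasurableSpace E] [MeasurableSpace F]

theorem wassersteinDist_map_le [MeasurableSub₂ E] [OpensMeasurableSpace E] (p : ℝ)
    {μ : Measure F} [IsProbabilityMeasure μ] {f g : F → E} (hf : Measurable f)
    (hg : Measurable g) :
    wassersteinDist p (μ.map f) (μ.map g) ≤ (∫ x, ‖f x - g x‖ ^ p ∂μ) ^ (1 / p) := by
  have hfg : Measurable fun x ↦ (f x, g x) := hf.prodMk hg
  refine csInf_le ⟨0, ?_⟩ ⟨μ.map fun x ↦ (f x, g x),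
    Measure.isProbabilityMeasure_map hfg.aemeasurable, ?_, ?_, ?_⟩
  · rintro r ⟨γ, -, -, -, rfl⟩
    exact Real.rpow_nonneg (integral_nonneg fun _ ↦ Real.rpow_nonneg (norm_nonneg _) _) _
  · rw [Measure.map_map measurable_fst hfg]
    rfl
  · rw [Measure.map_map measurable_snd hfg]
    rfl
  · rw [integral_map (f := fun z : E × E ↦ ‖z.1 - z.2‖ ^ p) hfg.aemeasurable
      ((measurable_fst.sub measurable_snd).norm.pow_const p).aestronglyMeasurable]

theorem wassersteinDist_map_le_opNorm_sub_mul {𝕜 : Type*} [NontriviallyNormedField 𝕜]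
    [NormedSpace 𝕜 E] [MeasurableSub₂ E] [BorelSpace E] [NormedAddCommGroup F]
    [NormedSpace 𝕜 F] [OpensMeasurableSpace F] {p : ℝ} (hp : 0 < p) {μ : Measure F}
    [IsProbabilityMeasure μ] (hμ : Integrable (fun x ↦ ‖x‖ ^ p) μ) (f g : F →L[𝕜] E) :
    wassersteinDist p (μ.map f) (μ.map g) ≤ ‖f - g‖ * (∫ x, ‖x‖ ^ p ∂μ) ^ (1 / p) := by
  have hpointwise (x : F) : ‖f x - g x‖ ^ p ≤ ‖f - g‖ ^ p * ‖x‖ ^ p := by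
    rw [← Real.mul_rpow (norm_nonneg _) (norm_nonneg _), ← sub_apply]
    gcongr
    exact (f - g).le_opNorm x
  calc wassersteinDist p (μ.map f) (μ.map g)
      ≤ (∫ x, ‖f x - g x‖ ^ p ∂μ) ^ (1 / p) := wassersteinDist_map_le p f.measurable g.measurable
    _ ≤ (∫ x, ‖f - g‖ ^ p * ‖x‖ ^ p ∂μ) ^ (1 / p) := by
      refine Real.rpow_le_rpow (integral_nonneg fun _ ↦ by positivity) ?_ (by positivity)
      exact integral_mono_of_nonneg (.of_forall fun _ ↦ by positivity) (hμ.const_mul _)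
        (.of_forall hpointwise)
    _ = ‖f - g‖ * (∫ x, ‖x‖ ^ p ∂μ) ^ (1 / p) := by
      rw [integral_const_mul, Real.mul_rpow (by positivity)
        (integral_nonneg fun _ ↦ by positivity), ← Real.rpow_mul (norm_nonneg _),
        mul_one_div_cancel hp.ne', Real.rpow_one]

end Coupling

theorem gaussianOf_eq_map_sqrt {d : ℕ} {A : Matrix (Fin d) (Fin d) ℝ} (hA : A.PosSemidef) :
    gaussianOf hA = (ProbabilityTheory.stdGaussian (EuclideanSpace ℝ (Fin d))).map
      (Matrix.toEuclideanCLM (𝕜 := ℝ) (CFC.sqrt A)) := by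
  rw [gaussianOf, ← ProbabilityTheory.map_pi_eq_stdGaussian,
    hA.sqrt_eq_unitary_mul_diagonal_mul_star]
  rfl

/-- For symmetric positive semidefinite `d×d` matrices `A, B` and `p ≥ 1`, the
Wasserstein-`p` distance between `N(0,A)` and `N(0,B)` is bounded by
`C_{p,d} ‖A - B‖_op^{1/2}`, with a constant depending only on `p` and `d`.
Here `‖·‖_op` is the operator norm, expressed via `Matrix.toEuclideanCLM`. -/
theorem wasserstein_gaussian_le (p : ℝ) (hp : 1 ≤ p) (d : ℕ) :
    ∃ C : ℝ, ∀ (A B : Matrix (Fin d) (Fin d) ℝ) (hA : A.PosSemidef) (hB : B.PosSemidef),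
      wassersteinDist p (gaussianOf hA) (gaussianOf hB)
        ≤ C * Real.sqrt ‖Matrix.toEuclideanCLM (𝕜 := ℝ) (A - B)‖ := by
  set μ := ProbabilityTheory.stdGaussian (EuclideanSpace ℝ (Fin d))
  have hmoment : Integrable (fun x ↦ ‖x‖ ^ p) μ := by
    have := ProbabilityTheory.IsGaussian.memLp_id μ (.ofReal p) ENNReal.ofReal_ne_top
    simpa [ENNReal.toReal_ofReal (by linarith : (0 : ℝ) ≤ p)] using this.integrable_norm_rpow'
  refine ⟨(∫ x, ‖x‖ ^ p ∂μ) ^ (1 / p), fun A B hA hB ↦ ?_⟩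
  rw [gaussianOf_eq_map_sqrt, gaussianOf_eq_map_sqrt, mul_comm]
  refine (wassersteinDist_map_le_opNorm_sub_mul (by linarith) hmoment _ _).trans ?_
  rw [← map_sub]
  gcongr
  exact Matrix.norm_toEuclideanCLM_sqrt_sub_sqrt_le hA hB
end

section
/- Let {X_i}_{i=0}^{n-1} be an M-dependent sequence of centered R^d-valued random vectors (blocks of indices at distance more than M are independent) with sup_i E‖X_i‖^2 ≤ σ^2 < ∞. Partition {0,...,n-1} into big blocks of length ℓ ≥ M and small blocks of length M as in the big–small block decomposition, let A be the sum over big blocks and Σ_n = (1/n)Var(Σ_i X_i). Then ‖(1/n)Var(A) − Σ_n‖ ≤ C σ^2 ( (2M+1)^2/ℓ + ℓ(2M+1)/n ) for an absolute constant C. -/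
open MeasureTheory ProbabilityTheory
open scoped ENNReal

/-- The covariance matrix of an `R^d`-valued random vector `S`. -/
noncomputable def covMatrix {Ω : Type*} [MeasurableSpace Ω] {d : ℕ} (Pr : Measure Ω)
    (S : Ω → EuclideanSpace ℝ (Fin d)) : Matrix (Fin d) (Fin d) ℝ :=
  Matrix.of fun a b =>
    ∫ ω, (S ω a - ∫ ω', S ω' a ∂Pr) * (S ω b - ∫ ω', S ω' b ∂Pr) ∂Pr

/-- `M`-dependence: subfamilies of `{X_i}` indexed by sets at distance more than `M`
are independent. -/
def MDependent {Ω : Type*} [MeasurableSpace Ω] {d : ℕ} (Pr : Measure Ω)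
    (X : ℕ → Ω → EuclideanSpace ℝ (Fin d)) (M : ℕ) : Prop :=
  ∀ K L : Set ℕ, (∀ i ∈ K, ∀ j ∈ L, (M : ℤ) < |(i : ℤ) - (j : ℤ)|) →
    IndepFun (fun ω => fun i : K => X i ω) (fun ω => fun j : L => X j ω) Pr

/-!
Expanding the covariances of the two centered sums writes `Var(Σ_{i<n} X_i) - Var(A)` as the sum
of `E[X_i X_jᵀ]` over the pairs `(i, j)` in `range n × range n` but not in `T × T`, where `T` is the
set of big-block indices; such a pair has an index outside `T`. By `M`-dependence only pairs with
`|i - j| ≤ M` contribute, each with operator norm at most `σ²`, so the difference has norm at most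
`2 (n - kℓ)(2M + 1)σ²`, and `n - kℓ ≤ nM/ℓ + 2ℓ`.
-/

open scoped RealInnerProductSpace

noncomputable def crossMoment {Ω : Type*} [MeasurableSpace Ω] {d : ℕ} (Pr : Measure Ω)
    (f g : Ω → EuclideanSpace ℝ (Fin d)) : Matrix (Fin d) (Fin d) ℝ :=
  Matrix.of fun a b => ∫ ω, f ω a * g ω b ∂Pr

section Moments

variable {Ω : Type*} [MeasurableSpace Ω] {d : ℕ} {Pr : Measure Ω}

namespace EuclideanSpace

lemma memLp_apply {p : ℝ≥0∞} {f : Ω → EuclideanSpace ℝ (Fin d)} (hf : MemLp f p Pr)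
    (a : Fin d) : MemLp (fun ω => f ω a) p Pr :=
  (EuclideanSpace.proj a : EuclideanSpace ℝ (Fin d) →L[ℝ] ℝ).comp_memLp' hf

lemma integral_apply {f : Ω → EuclideanSpace ℝ (Fin d)} (hf : Integrable f Pr) (a : Fin d) :
    ∫ ω, f ω a ∂Pr = (∫ ω, f ω ∂Pr) a :=
  (EuclideanSpace.proj a : EuclideanSpace ℝ (Fin d) →L[ℝ] ℝ).integral_comp_comm hf

lemma integrable_apply_mul_apply {f g : Ω → EuclideanSpace ℝ (Fin d)} (hf : MemLp f 2 Pr)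
    (hg : MemLp g 2 Pr) (a b : Fin d) : Integrable (fun ω => f ω a * g ω b) Pr :=
  (memLp_apply hf a).integrable_mul (memLp_apply hg b)

end EuclideanSpace

lemma covMatrix_eq_crossMoment {S : Ω → EuclideanSpace ℝ (Fin d)} (hS : Integrable S Pr)
    (h0 : ∫ ω, S ω ∂Pr = 0) : covMatrix Pr S = crossMoment Pr S S := by
  ext a b
  simp [covMatrix, crossMoment, EuclideanSpace.integral_apply hS, h0]

lemma crossMoment_sum_sum {ι κ : Type*} {s : Finset ι} {t : Finset κ}
    {Y : ι → Ω → EuclideanSpace ℝ (Fin d)} {Z : κ → Ω → EuclideanSpace ℝ (Fin d)}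
    (hY : ∀ i ∈ s, MemLp (Y i) 2 Pr) (hZ : ∀ j ∈ t, MemLp (Z j) 2 Pr) :
    crossMoment Pr (fun ω => ∑ i ∈ s, Y i ω) (fun ω => ∑ j ∈ t, Z j ω)
      = ∑ i ∈ s, ∑ j ∈ t, crossMoment Pr (Y i) (Z j) := by
  ext a b
  simp only [crossMoment, Matrix.of_apply, Matrix.sum_apply, WithLp.ofLp_sum, Finset.sum_apply,
    Finset.sum_mul_sum]
  rw [integral_finsetSum _ fun i hi => integrable_finsetSum _ fun j hj =>
    EuclideanSpace.integrable_apply_mul_apply (hY i hi) (hZ j hj) a b]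
  exact Finset.sum_congr rfl fun i hi => integral_finsetSum _ fun j hj =>
    EuclideanSpace.integrable_apply_mul_apply (hY i hi) (hZ j hj) a b

lemma covMatrix_sum [IsFiniteMeasure Pr] {ι : Type*} {s : Finset ι}
    {Y : ι → Ω → EuclideanSpace ℝ (Fin d)} (hY : ∀ i ∈ s, MemLp (Y i) 2 Pr)
    (h0 : ∀ i ∈ s, ∫ ω, Y i ω ∂Pr = 0) :
    covMatrix Pr (fun ω => ∑ i ∈ s, Y i ω) = ∑ i ∈ s, ∑ j ∈ s, crossMoment Pr (Y i) (Y j) := by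
  have hint : ∀ i ∈ s, Integrable (Y i) Pr := fun i hi => (hY i hi).integrable one_le_two
  rw [covMatrix_eq_crossMoment (integrable_finsetSum _ hint) ?_, crossMoment_sum_sum hY hY]
  rw [integral_finsetSum _ hint]
  exact Finset.sum_eq_zero h0

lemma toEuclideanCLM_crossMoment_apply {f g : Ω → EuclideanSpace ℝ (Fin d)}
    (hf : MemLp f 2 Pr) (hg : MemLp g 2 Pr) (v : EuclideanSpace ℝ (Fin d)) :
    Matrix.toEuclideanCLM (𝕜 := ℝ) (crossMoment Pr f g) v = ∫ ω, ⟪g ω, v⟫ • f ω ∂Pr := by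
  have hint : Integrable (fun ω => ⟪g ω, v⟫ • f ω) Pr :=
    memLp_one_iff_integrable.1 (hf.smul (p := 2) (q := 2) (hg.inner_const (𝕜 := ℝ) v))
  ext a
  rw [← EuclideanSpace.integral_apply hint, Matrix.ofLp_toEuclideanCLM]
  simp only [Matrix.mulVec, dotProduct, crossMoment, Matrix.of_apply, ← integral_mul_const]
  rw [← integral_finsetSum _ fun b _ =>
    (EuclideanSpace.integrable_apply_mul_apply hf hg a b).mul_const _]
  congr 1 with ω
  simp only [WithLp.ofLp_smul, Pi.smul_apply, smul_eq_mul, PiLp.inner_apply,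
    RCLike.inner_apply, conj_trivial, Finset.sum_mul]
  exact Finset.sum_congr rfl fun b _ => by ring

lemma norm_toEuclideanCLM_crossMoment_le {f g : Ω → EuclideanSpace ℝ (Fin d)}
    (hf : MemLp f 2 Pr) (hg : MemLp g 2 Pr) :
    ‖Matrix.toEuclideanCLM (𝕜 := ℝ) (crossMoment Pr f g)‖
      ≤ ((∫ ω, ‖f ω‖ ^ 2 ∂Pr) + ∫ ω, ‖g ω‖ ^ 2 ∂Pr) / 2 := by
  have hf2 := hf.norm.integrable_sq
  have hg2 := hg.norm.integrable_sq
  refine ContinuousLinearMap.opNorm_le_bound _ (by positivity) fun v => ?_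
  rw [toEuclideanCLM_crossMoment_apply hf hg v]
  calc ‖∫ ω, ⟪g ω, v⟫ • f ω ∂Pr‖ ≤ ∫ ω, (‖f ω‖ ^ 2 + ‖g ω‖ ^ 2) / 2 * ‖v‖ ∂Pr := by
        refine norm_integral_le_of_norm_le (((hf2.add hg2).div_const 2).mul_const _)
          (ae_of_all _ fun ω => ?_)
        rw [norm_smul, Real.norm_eq_abs]
        have hgv := abs_real_inner_le_norm (g ω) v
        nlinarith [sq_nonneg (‖f ω‖ - ‖g ω‖), norm_nonneg (f ω), norm_nonneg v,
          mul_le_mul_of_nonneg_right hgv (norm_nonneg (f ω))]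
    _ = _ := by rw [integral_mul_const, integral_div, integral_add hf2 hg2]

lemma crossMoment_eq_zero_of_indepFun {f g : Ω → EuclideanSpace ℝ (Fin d)}
    (hfg : IndepFun f g Pr) (hf : Integrable f Pr) (hf0 : ∫ ω, f ω ∂Pr = 0)
    (hg : AEStronglyMeasurable g Pr) : crossMoment Pr f g = 0 := by
  ext a b
  have hab : IndepFun (fun ω => f ω a) (fun ω => g ω b) Pr :=
    hfg.comp (EuclideanSpace.proj a).continuous.measurable
      (EuclideanSpace.proj b).continuous.measurable
  have hmul := hab.integral_mul_eq_mul_integral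
    ((EuclideanSpace.proj a).continuous.comp_aestronglyMeasurable hf.aestronglyMeasurable)
    ((EuclideanSpace.proj b).continuous.comp_aestronglyMeasurable hg)
  simp only [Pi.mul_apply] at hmul
  simp [crossMoment, hmul, EuclideanSpace.integral_apply hf, hf0]

lemma MDependent.indepFun {X : ℕ → Ω → EuclideanSpace ℝ (Fin d)} {M : ℕ}
    (hX : MDependent Pr X M) {i j : ℕ} (hij : (M : ℤ) < |(i : ℤ) - (j : ℤ)|) :
    IndepFun (X i) (X j) Pr :=
  (hX {i} {j} (by simpa using hij)).comp (measurable_pi_apply (⟨i, rfl⟩ : ({i} : Set ℕ)))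
    (measurable_pi_apply (⟨j, rfl⟩ : ({j} : Set ℕ)))

end Moments

section Banded

open Finset

variable {E : Type*} [SeminormedAddCommGroup E]

lemma card_filter_abs_sub_le (s : Finset ℕ) (M i : ℕ) :
    #{j ∈ s | |(i : ℤ) - ((j : ℕ) : ℤ)| ≤ M} ≤ 2 * M + 1 := by
  calc #{j ∈ s | |(i : ℤ) - ((j : ℕ) : ℤ)| ≤ M} ≤ #(Icc (i - M) (i + M)) := by
        refine card_le_card fun j hj => ?_
        have := abs_le.1 (mem_filter.1 hj).2
        simp only [mem_Icc]
        omega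
    _ ≤ 2 * M + 1 := by rw [Nat.card_Icc]; omega

lemma sum_norm_le_of_banded {a : ℕ → E} {c : ℝ} {M i : ℕ} (hc : ∀ j, ‖a j‖ ≤ c)
    (hband : ∀ j : ℕ, (M : ℤ) < |(i : ℤ) - (j : ℤ)| → a j = 0) (s : Finset ℕ) :
    ∑ j ∈ s, ‖a j‖ ≤ (2 * M + 1) * c := by
  have hc0 : 0 ≤ c := (norm_nonneg _).trans (hc 0)
  rw [← sum_filter_of_ne (f := fun j => ‖a j‖) (p := fun j => |(i : ℤ) - (j : ℤ)| ≤ M)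
    fun j _ hj => by
      by_contra h
      exact hj (by rw [hband j (not_le.1 h), norm_zero])]
  calc _ ≤ #{j ∈ s | |(i : ℤ) - ((j : ℕ) : ℤ)| ≤ M} • c :=
        sum_le_card_nsmul _ _ _ fun j _ => hc j
    _ ≤ (2 * M + 1) * c := by
        rw [nsmul_eq_mul]
        gcongr
        exact_mod_cast card_filter_abs_sub_le s M i

lemma norm_sum_sum_sub_sum_sum_le_of_banded {R T : Finset ℕ} (hTR : T ⊆ R)
    {a : ℕ → ℕ → E} {c : ℝ} {M : ℕ} (hc : ∀ i j, ‖a i j‖ ≤ c)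
    (hband : ∀ i j : ℕ, (M : ℤ) < |(i : ℤ) - (j : ℤ)| → a i j = 0) :
    ‖∑ i ∈ R, ∑ j ∈ R, a i j - ∑ i ∈ T, ∑ j ∈ T, a i j‖ ≤ 2 * #(R \ T) * ((2 * M + 1) * c) := by
  have hsplit : ∑ i ∈ R, ∑ j ∈ R, a i j - ∑ i ∈ T, ∑ j ∈ T, a i j
      = ∑ i ∈ R \ T, ∑ j ∈ R, a i j + ∑ j ∈ R \ T, ∑ i ∈ T, a i j := by
    have hT : ∑ i ∈ T, ∑ j ∈ R, a i j
        = ∑ j ∈ R \ T, ∑ i ∈ T, a i j + ∑ i ∈ T, ∑ j ∈ T, a i j := by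
      rw [sum_comm (s := R \ T), ← sum_add_distrib]
      exact sum_congr rfl fun i _ => (sum_sdiff hTR).symm
    rw [← sum_sdiff hTR (f := fun i => ∑ j ∈ R, a i j), hT]
    abel
  have hrow : ∀ i, ∑ j ∈ R, ‖a i j‖ ≤ (2 * M + 1) * c := fun i =>
    sum_norm_le_of_banded (hc i) (hband i) R
  have hcol : ∀ j, ∑ i ∈ T, ‖a i j‖ ≤ (2 * M + 1) * c := fun j =>
    sum_norm_le_of_banded (fun i => hc i j)
      (fun i hij => hband i j (by rwa [abs_sub_comm])) T
  rw [hsplit]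
  calc _ ≤ ∑ i ∈ R \ T, ∑ j ∈ R, ‖a i j‖ + ∑ j ∈ R \ T, ∑ i ∈ T, ‖a i j‖ :=
        (norm_add_le _ _).trans (add_le_add (norm_sum_le_of_le _ fun i _ => norm_sum_le _ _)
          (norm_sum_le_of_le _ fun j _ => norm_sum_le _ _))
    _ ≤ #(R \ T) • ((2 * M + 1) * c) + #(R \ T) • ((2 * M + 1) * c) :=
        add_le_add (sum_le_card_nsmul _ _ _ fun i _ => hrow i)
          (sum_le_card_nsmul _ _ _ fun j _ => hcol j)
    _ = 2 * #(R \ T) * ((2 * M + 1) * c) := by rw [nsmul_eq_mul]; ring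

end Banded

section Blocks

open Finset

def bigBlockIndices (n M ℓ : ℕ) : Finset ℕ :=
  (range (n / (ℓ + M)) ×ˢ range ℓ).image fun p => p.1 * (ℓ + M) + p.2

lemma sum_bigBlockIndices {β : Type*} [AddCommMonoid β] (n M ℓ : ℕ) (f : ℕ → β) :
    ∑ t ∈ bigBlockIndices n M ℓ, f t
      = ∑ j ∈ range (n / (ℓ + M)), ∑ i ∈ range ℓ, f (j * (ℓ + M) + i) := by
  rw [bigBlockIndices, sum_image, sum_product]
  rintro ⟨j, i⟩ hji ⟨j', i'⟩ hji' h
  simp only [coe_product, coe_range, Set.mem_prod, Set.mem_Iio] at hji hji' h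
  have hi : i = i' := by
    simpa [Nat.mul_add_mod, Nat.mod_eq_of_lt (show i < ℓ + M by omega),
      Nat.mod_eq_of_lt (show i' < ℓ + M by omega)] using congrArg (· % (ℓ + M)) h
  subst hi
  simp only [Prod.mk.injEq, and_true]
  exact Nat.eq_of_mul_eq_mul_right (by omega) (Nat.add_right_cancel h)

lemma card_bigBlockIndices (n M ℓ : ℕ) : #(bigBlockIndices n M ℓ) = n / (ℓ + M) * ℓ := by
  rw [card_eq_sum_ones, sum_bigBlockIndices]
  simp

lemma bigBlockIndices_subset_range (n M ℓ : ℕ) : bigBlockIndices n M ℓ ⊆ range n := by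
  intro t ht
  simp only [bigBlockIndices, mem_image, mem_product, mem_range] at ht
  obtain ⟨⟨j, i⟩, ⟨hj, hi⟩, rfl⟩ := ht
  have : (j + 1) * (ℓ + M) ≤ n :=
    (Nat.mul_le_mul_right _ hj).trans (Nat.div_mul_le_self n (ℓ + M))
  rw [mem_range]
  nlinarith

lemma card_range_sdiff_bigBlockIndices (n M ℓ : ℕ) :
    #(range n \ bigBlockIndices n M ℓ) = n - n / (ℓ + M) * ℓ := by
  rw [card_sdiff_of_subset (bigBlockIndices_subset_range n M ℓ), card_range,
    card_bigBlockIndices]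

end Blocks

lemma cast_sub_div_mul_div_le {n M ℓ : ℕ} (hn : 0 < n) (hℓ : 0 < ℓ) (hMℓ : M ≤ ℓ) :
    ((n - n / (ℓ + M) * ℓ : ℕ) : ℝ) / n ≤ M / ℓ + 2 * ℓ / n := by
  set k := n / (ℓ + M)
  set r := n % (ℓ + M)
  have hdiv : ((ℓ + M) * k + r : ℝ) = n := by exact_mod_cast Nat.div_add_mod n (ℓ + M)
  have hr : (r : ℝ) < ℓ + M := by exact_mod_cast Nat.mod_lt n (by omega)
  have hkℓ : k * ℓ ≤ n := (Nat.mul_le_mul_left k (Nat.le_add_right ℓ M)).trans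
    (Nat.div_mul_le_self n (ℓ + M))
  have hkℓ' : (k * ℓ : ℝ) ≤ n := by exact_mod_cast hkℓ
  have hM : (M : ℝ) ≤ ℓ := by exact_mod_cast hMℓ
  have hℓ' : (0 : ℝ) < ℓ := by exact_mod_cast hℓ
  have hn' : (0 : ℝ) < n := by exact_mod_cast hn
  -- `n - kℓ = kM + r` with `kℓ ≤ n` and `r < ℓ + M ≤ 2ℓ`
  have key : ((n : ℝ) - k * ℓ) * ℓ ≤ M * n + 2 * ℓ ^ 2 := by
    nlinarith [mul_le_mul_of_nonneg_right hkℓ' (Nat.cast_nonneg (α := ℝ) M),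
      mul_le_mul_of_nonneg_right hr.le hℓ'.le, mul_le_mul_of_nonneg_right hM hℓ'.le]
  calc ((n - k * ℓ : ℕ) : ℝ) / n = ((n - k * ℓ) * ℓ) / (ℓ * n) := by
        rw [Nat.cast_sub hkℓ, Nat.cast_mul, mul_comm (ℓ : ℝ), mul_div_mul_right _ _ hℓ'.ne']
    _ ≤ (M * n + 2 * ℓ ^ 2) / (ℓ * n) := by gcongr
    _ = M / ℓ + 2 * ℓ / n := by field_simp

lemma small_block_error_le {n M ℓ : ℕ} (hn : 0 < n) (hℓ : 0 < ℓ) (hMℓ : M ≤ ℓ) {s : ℝ}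
    (hs : 0 ≤ s) :
    (n : ℝ)⁻¹ * (2 * ((n - n / (ℓ + M) * ℓ : ℕ) : ℝ) * ((2 * M + 1) * s))
      ≤ 4 * s * ((2 * M + 1) ^ 2 / ℓ + ℓ * (2 * M + 1) / n) := by
  calc (n : ℝ)⁻¹ * (2 * ((n - n / (ℓ + M) * ℓ : ℕ) : ℝ) * ((2 * M + 1) * s))
      = 2 * (2 * M + 1) * s * (((n - n / (ℓ + M) * ℓ : ℕ) : ℝ) / n) := by ring
    _ ≤ 2 * (2 * M + 1) * s * (M / ℓ + 2 * ℓ / n) := by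
        gcongr
        exact cast_sub_div_mul_div_le hn hℓ hMℓ
    _ = s * (2 * M * (2 * M + 1) / ℓ + 4 * (ℓ * (2 * M + 1) / n)) := by ring
    _ ≤ s * (4 * (2 * M + 1) ^ 2 / ℓ + 4 * (ℓ * (2 * M + 1) / n)) := by
        gcongr s * (?_ / _ + _)
        nlinarith
    _ = 4 * s * ((2 * M + 1) ^ 2 / ℓ + ℓ * (2 * M + 1) / n) := by ring

/-- Big–small block decomposition for `M`-dependent centered sequences: with big blocks
of length `ℓ ≥ M`, small blocks of length `M`, `k = ⌊n/(ℓ+M)⌋` blocks, `A` the sum over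
big blocks and `Σ_n = (1/n)Var(Σ_i X_i)`, one has
`‖(1/n)Var(A) − Σ_n‖ ≤ C σ² ((2M+1)²/ℓ + ℓ(2M+1)/n)` for an absolute constant `C`
(`‖·‖` is the operator norm). -/
theorem big_small_block_covariance :
    ∃ C : ℝ, ∀ (d : ℕ) (Ω : Type) [MeasurableSpace Ω]
      (Pr : Measure Ω) [IsProbabilityMeasure Pr]
      (n M ℓ : ℕ) (X : ℕ → Ω → EuclideanSpace ℝ (Fin d)) (σ : ℝ),
      1 ≤ n → 1 ≤ ℓ → M ≤ ℓ →
      (∀ i, Measurable (X i)) →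
      (∀ i, MemLp (X i) 2 Pr) →
      (∀ i, ∫ ω, X i ω ∂Pr = 0) →
      (∀ i, ∫ ω, ‖X i ω‖ ^ 2 ∂Pr ≤ σ ^ 2) →
      MDependent Pr X M →
      ‖Matrix.toEuclideanCLM (𝕜 := ℝ)
          (((n : ℝ))⁻¹ • covMatrix Pr (fun ω =>
              ∑ j ∈ Finset.range (n / (ℓ + M)), ∑ i ∈ Finset.range ℓ,
                X (j * (ℓ + M) + i) ω)
            - ((n : ℝ))⁻¹ • covMatrix Pr (fun ω => ∑ i ∈ Finset.range n, X i ω))‖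
        ≤ C * σ ^ 2 * (((2 * M + 1 : ℝ)) ^ 2 / ℓ + (ℓ : ℝ) * (2 * M + 1) / n) := by
  refine ⟨4, fun d Ω _ Pr _ n M ℓ X σ hn hℓ hMℓ _ hX2 hX0 hXσ hdep => ?_⟩
  set a : ℕ → ℕ → _ := fun i j => Matrix.toEuclideanCLM (𝕜 := ℝ) (crossMoment Pr (X i) (X j))
  have ha : ∀ i j, ‖a i j‖ ≤ σ ^ 2 := fun i j =>
    (norm_toEuclideanCLM_crossMoment_le (hX2 i) (hX2 j)).trans (by linarith [hXσ i, hXσ j])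
  have hband : ∀ i j : ℕ, (M : ℤ) < |(i : ℤ) - (j : ℤ)| → a i j = 0 := fun i j hij => by
    simp [a, crossMoment_eq_zero_of_indepFun (hdep.indepFun hij) ((hX2 i).integrable one_le_two)
      (hX0 i) (hX2 j).aestronglyMeasurable]
  have hbig : (fun ω => ∑ j ∈ Finset.range (n / (ℓ + M)), ∑ i ∈ Finset.range ℓ,
      X (j * (ℓ + M) + i) ω) = fun ω => ∑ t ∈ bigBlockIndices n M ℓ, X t ω :=
    funext fun ω => (sum_bigBlockIndices n M ℓ (X · ω)).symm
  rw [hbig, covMatrix_sum (fun i _ => hX2 i) (fun i _ => hX0 i),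
    covMatrix_sum (fun i _ => hX2 i) (fun i _ => hX0 i), ← smul_sub, map_smul, map_sub]
  simp only [map_sum]
  rw [norm_smul, norm_sub_rev, norm_inv, Real.norm_natCast]
  calc (n : ℝ)⁻¹ * ‖∑ i ∈ Finset.range n, ∑ j ∈ Finset.range n, a i j
        - ∑ i ∈ bigBlockIndices n M ℓ, ∑ j ∈ bigBlockIndices n M ℓ, a i j‖
      ≤ (n : ℝ)⁻¹ * (2 * (Finset.range n \ bigBlockIndices n M ℓ).card
          * ((2 * M + 1) * σ ^ 2)) := by
        gcongr
        exact norm_sum_sum_sub_sum_sum_le_of_banded (bigBlockIndices_subset_range n M ℓ) ha hband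
    _ ≤ 4 * σ ^ 2 * ((2 * M + 1) ^ 2 / ℓ + ℓ * (2 * M + 1) / n) := by
        rw [card_range_sdiff_bigBlockIndices]
        exact small_block_error_le hn hℓ hMℓ (sq_nonneg σ)
end

section
/- Let {Λ_i}_{i≥1} be a sequence of nonnegative integer-valued random variables such that {Λ_i}_{i≥2} are i.i.d. with mean μ ∈ (0,∞) and there exist θ > 0 with sup_i E[e^{θΛ_i}] < ∞. Set T_k = Λ_1 + … + Λ_k and K_n = min{k ≥ 1 : T_k > n} + 1. Then for every q ≥ 1 there is a constant C_q with E|K_n − ⌊n/μ⌋|^q ≤ C_q n^{q/2} for all n ≥ 1. -/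
/-!
For `|t| ≤ θ/2` each summand after the first satisfies `E e^{tΛ} ≤ exp(tμ + t²A)` with
`A = 8B/θ²`, by `e^y ≤ 1 + y + y² e^{|y|}`. Chernoff's bound at `t = ε/√n` then shows that
`T_k ≤ n` for `k ≈ n/μ + r`, and `T_k > n` for `k ≈ n/μ - r`, both have probability
`O(exp(-c r/√n))`; the quadratic term `k t² A` stays bounded because `t² ≈ ε²/n` and `k ≈ n/μ`.
The renewal count can only be `r` away from `⌊n/μ⌋` if one of these events occurs, so its
deviation has an exponential tail at scale `√n`, and the layer-cake formula turns this tail into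
`E|K_n - ⌊n/μ⌋|^q ≤ C Γ(q + 1) (√n/c)^q`.
-/

open MeasureTheory ProbabilityTheory Real Set
open scoped ENNReal

lemma exp_le_one_add_add_sq_mul_exp_abs (y : ℝ) : exp y ≤ 1 + y + y ^ 2 * exp |y| := by
  rcases le_or_gt |y| 1 with hy | hy
  · have h := (abs_le.1 (abs_exp_sub_one_sub_id_le hy)).2
    nlinarith [one_le_exp (abs_nonneg y), sq_nonneg y]
  · have hy2 : |y| ≤ y ^ 2 := by rw [← sq_abs]; nlinarith
    rcases le_or_gt 0 y with hy0 | hy0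
    · rw [abs_of_nonneg hy0] at hy hy2 ⊢
      nlinarith [exp_pos y]
    · rw [abs_of_neg hy0] at hy hy2
      nlinarith [exp_le_one_iff.2 hy0.le, one_le_exp (abs_nonneg y), sq_nonneg y]

lemma sq_mul_exp_half_le {θ x : ℝ} (hθ : 0 < θ) (hx : 0 ≤ x) :
    x ^ 2 * exp (θ * x / 2) ≤ 8 / θ ^ 2 * exp (θ * x) := by
  have h := pow_div_factorial_le_exp _ (by positivity : 0 ≤ θ * x / 2) 2
  have hsplit : exp (θ * x) = exp (θ * x / 2) * exp (θ * x / 2) := by rw [← exp_add]; ring_nf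
  rw [hsplit, ← mul_assoc]
  gcongr
  rw [div_mul_eq_mul_div, le_div_iff₀ (by positivity)]
  norm_num [Nat.factorial] at h
  nlinarith

lemma exp_mul_le_one_add_add_sq_mul_exp {θ t x : ℝ} (hθ : 0 < θ) (ht : |t| ≤ θ / 2)
    (hx : 0 ≤ x) : exp (t * x) ≤ 1 + t * x + t ^ 2 * (8 / θ ^ 2 * exp (θ * x)) :=
  calc exp (t * x) ≤ 1 + t * x + (t * x) ^ 2 * exp |t * x| :=
        exp_le_one_add_add_sq_mul_exp_abs _
    _ ≤ 1 + t * x + t ^ 2 * (x ^ 2 * exp (θ * x / 2)) := by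
        rw [mul_pow, mul_assoc, abs_mul, abs_of_nonneg hx]
        gcongr
        nlinarith
    _ ≤ 1 + t * x + t ^ 2 * (8 / θ ^ 2 * exp (θ * x)) := by
        grw [sq_mul_exp_half_le hθ hx]

section ExponentialMoment

variable {Ω : Type*} [MeasurableSpace Ω] {P : Measure Ω} {X : Ω → ℝ} {θ t : ℝ}

lemma integrable_exp_mul_of_le_of_nonneg (hX : AEMeasurable X P) (hX0 : ∀ ω, 0 ≤ X ω)
    (hθ : Integrable (fun ω => exp (θ * X ω)) P) (ht : t ≤ θ) :
    Integrable (fun ω => exp (t * X ω)) P :=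
  hθ.mono' (by fun_prop) (ae_of_all _ fun ω => by
    rw [norm_of_nonneg (exp_pos _).le]
    exact exp_le_exp.2 (mul_le_mul_of_nonneg_right ht (hX0 ω)))

lemma mgf_le_integral_exp_mul_of_le (hX : AEMeasurable X P) (hX0 : ∀ ω, 0 ≤ X ω)
    (hθ : Integrable (fun ω => exp (θ * X ω)) P) (ht : t ≤ θ) :
    mgf X P t ≤ ∫ ω, exp (θ * X ω) ∂P :=
  integral_mono (integrable_exp_mul_of_le_of_nonneg hX hX0 hθ ht) hθ fun ω =>
    exp_le_exp.2 (mul_le_mul_of_nonneg_right ht (hX0 ω))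

lemma mgf_le_exp_mul_integral_add_sq [IsProbabilityMeasure P] (hX : AEMeasurable X P)
    (hX0 : ∀ ω, 0 ≤ X ω) (hθ0 : 0 < θ) (hθ : Integrable (fun ω => exp (θ * X ω)) P)
    (ht : |t| ≤ θ / 2) :
    mgf X P t ≤ exp (t * P[X] + t ^ 2 * (8 / θ ^ 2 * ∫ ω, exp (θ * X ω) ∂P)) := by
  have hXint : Integrable X P := by
    simpa using integrable_pow_of_integrable_exp_mul hθ0.ne' hθ
      (integrable_exp_mul_of_le_of_nonneg hX hX0 hθ (by linarith)) 1
  have hlin : Integrable (fun ω => 1 + t * X ω) P := (integrable_const 1).add (hXint.const_mul t)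
  have hquad : Integrable (fun ω => t ^ 2 * (8 / θ ^ 2 * exp (θ * X ω))) P :=
    (hθ.const_mul _).const_mul _
  calc mgf X P t ≤ ∫ ω, (1 + t * X ω + t ^ 2 * (8 / θ ^ 2 * exp (θ * X ω))) ∂P :=
        integral_mono (integrable_exp_mul_of_le_of_nonneg hX hX0 hθ (by linarith [le_abs_self t]))
          (hlin.add hquad) fun ω => exp_mul_le_one_add_add_sq_mul_exp hθ0 ht (hX0 ω)
    _ = 1 + t * P[X] + t ^ 2 * (8 / θ ^ 2 * ∫ ω, exp (θ * X ω) ∂P) := by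
        rw [integral_add hlin hquad, integral_add (integrable_const 1) (hXint.const_mul t),
          integral_const_mul, integral_const_mul, integral_const_mul]
        simp
    _ ≤ _ := by
        rw [add_assoc, add_comm]
        exact add_one_le_exp _

end ExponentialMoment

lemma monotone_sum_range_of_nonneg {M : Type*} [AddCommMonoid M] [PartialOrder M]
    [IsOrderedAddMonoid M] {f : ℕ → M} (hf : ∀ i, 0 ≤ f i) :
    Monotone fun k => ∑ i ∈ Finset.range k, f i :=
  fun _ _ hkl => Finset.sum_le_sum_of_subset_of_nonneg (Finset.range_mono hkl) fun i _ _ => hf i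

section LayerCake

variable {α : Type*} [MeasurableSpace α] {ν : Measure α} {p l : ℝ} {C : ℝ≥0∞}

lemma lintegral_rpow_le_of_meas_le_exp {f : α → ℝ} (hf0 : 0 ≤ᵐ[ν] f) (hf : AEMeasurable f ν)
    (hp : 0 < p) (hl : 0 < l)
    (htail : ∀ t > 0, ν {a | t ≤ f a} ≤ C * ENNReal.ofReal (exp (-(l * t)))) :
    ∫⁻ a, ENNReal.ofReal (f a ^ p) ∂ν ≤ C * ENNReal.ofReal (Gamma (p + 1) / l ^ p) := by
  have hint : IntegrableOn (fun t : ℝ => t ^ (p - 1) * exp (-(l * t))) (Ioi 0) := by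
    simpa [rpow_one, neg_mul] using
      integrableOn_rpow_mul_exp_neg_mul_rpow (p := 1) (s := p - 1) (by linarith) one_pos hl
  rw [lintegral_rpow_eq_lintegral_meas_le_mul ν hf0 hf hp]
  calc ENNReal.ofReal p * ∫⁻ t in Ioi (0 : ℝ), ν {a | t ≤ f a} * ENNReal.ofReal (t ^ (p - 1))
      ≤ ENNReal.ofReal p * ∫⁻ t in Ioi 0, C * ENNReal.ofReal (t ^ (p - 1) * exp (-(l * t))) := by
        refine mul_le_mul_right (setLIntegral_mono' measurableSet_Ioi fun t ht => ?_) _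
        calc ν {a | t ≤ f a} * ENNReal.ofReal (t ^ (p - 1))
            ≤ C * ENNReal.ofReal (exp (-(l * t))) * ENNReal.ofReal (t ^ (p - 1)) := by
              gcongr
              exact htail t ht
          _ = C * ENNReal.ofReal (t ^ (p - 1) * exp (-(l * t))) := by
              rw [mul_assoc, ← ENNReal.ofReal_mul (exp_pos _).le, mul_comm (exp (-(l * t)))]
    _ = ENNReal.ofReal p * (C * ENNReal.ofReal (∫ t in Ioi 0, t ^ (p - 1) * exp (-(l * t)))) := by
        rw [lintegral_const_mul _ (by fun_prop), ofReal_integral_eq_lintegral_ofReal hint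
          ((ae_restrict_iff' measurableSet_Ioi).2
            (ae_of_all _ fun t (ht : 0 < t) => by positivity))]
    _ = C * ENNReal.ofReal (Gamma (p + 1) / l ^ p) := by
        rw [integral_rpow_mul_exp_neg_mul_Ioi hp hl, mul_left_comm, ← ENNReal.ofReal_mul hp.le,
          Gamma_add_one hp.ne', one_div, inv_rpow hl.le]
        ring_nf

lemma lintegral_natCast_rpow_le_of_meas_le_exp {g : α → ℕ} (hg : Measurable g) (hp : 0 < p)
    (hl : 0 < l) (htail : ∀ r : ℕ, ν {a | r ≤ g a} ≤ C * ENNReal.ofReal (exp (-(l * r)))) :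
    ∫⁻ a, (g a : ℝ≥0∞) ^ p ∂ν ≤ C * ENNReal.ofReal (Gamma (p + 1) / l ^ p) := by
  have hcast : ∀ a, (g a : ℝ≥0∞) ^ p = ENNReal.ofReal ((g a : ℝ) ^ p) := fun a => by
    rw [← ENNReal.ofReal_natCast, ENNReal.ofReal_rpow_of_nonneg (Nat.cast_nonneg _) hp.le]
  simp_rw [hcast]
  refine lintegral_rpow_le_of_meas_le_exp (ae_of_all _ fun a => Nat.cast_nonneg _)
    (by fun_prop) hp hl fun t _ => ?_
  have hceil : {a | t ≤ (g a : ℝ)} = {a | ⌈t⌉₊ ≤ g a} := by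
    ext a
    simp [Nat.ceil_le]
  grw [hceil, htail, Nat.le_ceil t]

end LayerCake

section RenewalCount

variable {α : Type*} [LinearOrder α] {T : ℕ → α} {x : α}

-- Since `sInf ∅ = 0`, the count is `0` when no `T k` with `k ≥ 1` exceeds `x`.
noncomputable def renewalCount (T : ℕ → α) (x : α) : ℕ := sInf {k | 1 ≤ k ∧ x < T k}

lemma lt_iff_one_le_renewalCount_and_le (hT : Monotone T) {k : ℕ} (hk : 1 ≤ k) :
    x < T k ↔ 1 ≤ renewalCount T x ∧ renewalCount T x ≤ k := by
  constructor
  · intro hx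
    have hmem : k ∈ {k | 1 ≤ k ∧ x < T k} := ⟨hk, hx⟩
    exact ⟨(Nat.sInf_mem ⟨k, hmem⟩).1, Nat.sInf_le hmem⟩
  · rintro ⟨hpos, hle⟩
    exact (Nat.sInf_mem (Nat.nonempty_of_pos_sInf hpos)).2.trans_le (hT hle)

lemma le_or_lt_of_le_natAbs_renewalCount_sub (hT : Monotone T) {m r : ℕ} (hr : 3 ≤ r)
    (h : r ≤ (((renewalCount T x + 1 : ℕ) : ℤ) - m).natAbs) :
    T (m + r - 2) ≤ x ∨ (r + 2 ≤ m ∧ x < T (m - r - 1)) := by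
  by_contra! hfar
  obtain ⟨hlow, hup⟩ := hfar
  have hcount := (lt_iff_one_le_renewalCount_and_le hT (by omega)).1 hlow
  have hearly : 1 ≤ renewalCount T x ∧ renewalCount T x ≤ m - r - 1 := by omega
  exact (hup (by omega)).not_gt ((lt_iff_one_le_renewalCount_and_le hT (by omega)).2 hearly)

lemma measurable_nat_sInf {Ω : Type*} [MeasurableSpace Ω] {S : Ω → Set ℕ}
    (hS : ∀ k, MeasurableSet {ω | k ∈ S ω}) : Measurable fun ω => sInf (S ω) := by
  refine measurable_of_Iic fun j => ?_
  have hpre : (fun ω => sInf (S ω)) ⁻¹' Iic j =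
      (⋂ k, {ω | k ∈ S ω}ᶜ) ∪ ⋃ k ∈ Iic j, {ω | k ∈ S ω} := by
    ext ω
    simp only [mem_preimage, mem_Iic, mem_union, mem_iInter, mem_compl_iff, mem_ofPred_eq,
      mem_iUnion, exists_prop]
    constructor
    · intro hle
      by_cases hne : (S ω).Nonempty
      · exact Or.inr ⟨_, hle, Nat.sInf_mem hne⟩
      · exact Or.inl fun k hk => hne ⟨k, hk⟩
    · rintro (hempty | ⟨k, hk, hmem⟩)
      · rw [Set.eq_empty_of_forall_notMem hempty, Nat.sInf_empty]
        exact Nat.zero_le j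
      · exact (Nat.sInf_le hmem).trans hk
  rw [hpre]
  exact (MeasurableSet.iInter fun k => (hS k).compl).union
    (MeasurableSet.biUnion (to_countable _) fun k _ => hS k)

@[fun_prop]
lemma measurable_renewalCount {Ω : Type*} [MeasurableSpace Ω] {T : ℕ → Ω → ℝ}
    (hT : ∀ k, Measurable (T k)) (x : ℝ) : Measurable fun ω => renewalCount (T · ω) x :=
  measurable_nat_sInf fun k => (MeasurableSet.const (1 ≤ k)).inter
    (measurableSet_lt measurable_const (hT k))

end RenewalCount

lemma chernoff_exponent_le {μ A ε x t d k m r : ℝ} (hμ : 0 < μ) (hA : 0 ≤ A) (hε : 0 ≤ ε)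
    (hεA : ε * A ≤ μ / 2) (hx : 1 ≤ x) (ht : t = ε / √x) (hd : (r - 4) * μ ≤ d)
    (hk : k ≤ m + r) (hm : m * μ ≤ x) (hr : 0 ≤ r) :
    -t * d + k * t ^ 2 * A ≤ 4 * ε * μ + ε / 2 - ε * μ / 2 / √x * r := by
  have hs : 1 ≤ √x := one_le_sqrt.2 hx
  have ht0 : 0 ≤ t := ht ▸ by positivity
  have htε : t ≤ ε := ht ▸ div_le_self hε hs
  have htA : t * A ≤ μ / 2 := (mul_le_mul_of_nonneg_right htε hA).trans hεA
  have hdrift : -t * d ≤ 4 * ε * μ - t * μ * r := by nlinarith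
  have hquad : k * t ^ 2 * A ≤ m * (t ^ 2 * A) + r * (t ^ 2 * A) := by
    nlinarith [mul_le_mul_of_nonneg_right hk (by positivity : 0 ≤ t ^ 2 * A)]
  have hmt : m * (t ^ 2 * A) ≤ ε / 2 := by
    have htx : t ^ 2 * x = ε ^ 2 := by
      rw [ht, div_pow, sq_sqrt (by linarith)]
      field_simp
    have : m * (t ^ 2 * A) * μ ≤ ε / 2 * μ := by
      nlinarith [mul_le_mul_of_nonneg_right hm (by positivity : 0 ≤ t ^ 2 * A),
        mul_le_mul_of_nonneg_left hεA hε]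
    exact le_of_mul_le_mul_right this hμ
  have hrt : r * (t ^ 2 * A) ≤ t * μ / 2 * r := by
    nlinarith [mul_le_mul_of_nonneg_left htA (mul_nonneg hr ht0)]
  have hrate : t * μ / 2 * r = ε * μ / 2 / √x * r := by rw [ht]; ring
  linarith

section DelayedRenewal

variable {Ω : Type*} [MeasurableSpace Ω]

structure IsDelayedRenewalSequence (P : Measure Ω) (X : ℕ → Ω → ℝ) (μ θ B : ℝ) : Prop where
  indep : iIndepFun X P
  measurable : ∀ i, Measurable (X i)
  nonneg : ∀ i ω, 0 ≤ X i ω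
  integrable_exp : ∀ i, Integrable (fun ω => exp (θ * X i ω)) P
  integral_exp_le : ∀ i, ∫ ω, exp (θ * X i ω) ∂P ≤ B
  integral_succ : ∀ i, P[X (i + 1)] = μ

namespace IsDelayedRenewalSequence

variable {P : Measure Ω} [IsProbabilityMeasure P] {X : ℕ → Ω → ℝ} {μ θ B t : ℝ}

lemma one_le_expMomentBound (h : IsDelayedRenewalSequence P X μ θ B) (hθ : 0 ≤ θ) : 1 ≤ B :=
  calc 1 = ∫ _, (1 : ℝ) ∂P := by simp
    _ ≤ ∫ ω, exp (θ * X 0 ω) ∂P := integral_mono (integrable_const 1) (h.integrable_exp 0)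
        fun ω => one_le_exp (mul_nonneg hθ (h.nonneg 0 ω))
    _ ≤ B := h.integral_exp_le 0

lemma mgf_succ_le (h : IsDelayedRenewalSequence P X μ θ B) (hθ : 0 < θ) (ht : |t| ≤ θ / 2)
    (i : ℕ) : mgf (X (i + 1)) P t ≤ exp (t * μ + t ^ 2 * (8 * B / θ ^ 2)) := by
  grw [mgf_le_exp_mul_integral_add_sq (h.measurable _).aemeasurable (h.nonneg _) hθ
    (h.integrable_exp _) ht, h.integral_succ, h.integral_exp_le, div_mul_eq_mul_div]

lemma mgf_sum_le (h : IsDelayedRenewalSequence P X μ θ B) (hθ : 0 < θ) (ht : |t| ≤ θ / 2)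
    (k : ℕ) :
    mgf (∑ i ∈ Finset.range (k + 1), X i) P t ≤
      B * exp (k * (t * μ + t ^ 2 * (8 * B / θ ^ 2))) := by
  rw [h.indep.mgf_sum h.measurable, Finset.prod_range_succ', exp_nat_mul, mul_comm B]
  gcongr
  · exact mgf_nonneg
  · exact (Finset.prod_le_prod (fun _ _ => mgf_nonneg) fun i _ => h.mgf_succ_le hθ ht i).trans
      (by rw [Finset.prod_const, Finset.card_range])
  · exact (mgf_le_integral_exp_mul_of_le (h.measurable 0).aemeasurable (h.nonneg 0)
      (h.integrable_exp 0) (by linarith [le_abs_self t])).trans (h.integral_exp_le 0)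

lemma integrable_exp_mul_sum (h : IsDelayedRenewalSequence P X μ θ B) (ht : t ≤ θ) (k : ℕ) :
    Integrable (fun ω => exp (t * (∑ i ∈ Finset.range k, X i) ω)) P :=
  h.indep.integrable_exp_mul_sum h.measurable fun i _ =>
    integrable_exp_mul_of_le_of_nonneg (h.measurable i).aemeasurable (h.nonneg i)
      (h.integrable_exp i) ht

lemma measure_sum_le_le (h : IsDelayedRenewalSequence P X μ θ B) (hθ : 0 < θ) (ht0 : 0 ≤ t)
    (ht : t ≤ θ / 2) (k : ℕ) (x : ℝ) :
    P {ω | ∑ i ∈ Finset.range (k + 1), X i ω ≤ x} ≤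
      ENNReal.ofReal (B * exp (-t * (k * μ - x) + k * t ^ 2 * (8 * B / θ ^ 2))) := by
  have hchernoff := measure_le_le_exp_mul_mgf x (neg_nonpos.2 ht0)
    (h.integrable_exp_mul_sum (t := -t) (by linarith) (k + 1))
  grw [h.mgf_sum_le hθ (by rwa [abs_neg, abs_of_nonneg ht0]) k] at hchernoff
  rw [← ofReal_measureReal]
  simp only [Finset.sum_apply] at hchernoff
  refine ENNReal.ofReal_le_ofReal (hchernoff.trans_eq ?_)
  rw [mul_left_comm, ← exp_add]
  ring_nf

lemma measure_le_sum_le (h : IsDelayedRenewalSequence P X μ θ B) (hθ : 0 < θ) (ht0 : 0 ≤ t)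
    (ht : t ≤ θ / 2) (k : ℕ) (x : ℝ) :
    P {ω | x ≤ ∑ i ∈ Finset.range (k + 1), X i ω} ≤
      ENNReal.ofReal (B * exp (-t * (x - k * μ) + k * t ^ 2 * (8 * B / θ ^ 2))) := by
  have hchernoff := measure_ge_le_exp_mul_mgf x ht0
    (h.integrable_exp_mul_sum (t := t) (by linarith) (k + 1))
  grw [h.mgf_sum_le hθ (by rwa [abs_of_nonneg ht0]) k] at hchernoff
  rw [← ofReal_measureReal]
  simp only [Finset.sum_apply] at hchernoff
  refine ENNReal.ofReal_le_ofReal (hchernoff.trans_eq ?_)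
  rw [mul_left_comm, ← exp_add]
  ring_nf

section ChernoffAtScale

variable {ε x m r : ℝ} {k : ℕ}

lemma measure_sum_le_le_exp_neg_sqrt (h : IsDelayedRenewalSequence P X μ θ B) (hμ : 0 < μ)
    (hθ : 0 < θ) (hε : 0 ≤ ε) (hεθ : ε ≤ θ / 2) (hεA : ε * (8 * B / θ ^ 2) ≤ μ / 2)
    (hx : 1 ≤ x) (hk : k ≤ m + r) (hm : m * μ ≤ x) (hr : 0 ≤ r) (hd : (r - 4) * μ ≤ k * μ - x) :
    P {ω | ∑ i ∈ Finset.range (k + 1), X i ω ≤ x} ≤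
      ENNReal.ofReal (B * exp (4 * ε * μ + ε / 2 - ε * μ / 2 / √x * r)) := by
  have hB := h.one_le_expMomentBound hθ.le
  refine (h.measure_sum_le_le hθ (div_nonneg hε (sqrt_nonneg x))
    ((div_le_self hε (one_le_sqrt.2 hx)).trans hεθ) k x).trans (ENNReal.ofReal_le_ofReal ?_)
  gcongr
  exact chernoff_exponent_le hμ (div_nonneg (by linarith) (sq_nonneg θ)) hε hεA hx rfl hd hk hm hr

lemma measure_le_sum_le_exp_neg_sqrt (h : IsDelayedRenewalSequence P X μ θ B) (hμ : 0 < μ)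
    (hθ : 0 < θ) (hε : 0 ≤ ε) (hεθ : ε ≤ θ / 2) (hεA : ε * (8 * B / θ ^ 2) ≤ μ / 2)
    (hx : 1 ≤ x) (hk : k ≤ m + r) (hm : m * μ ≤ x) (hr : 0 ≤ r) (hd : (r - 4) * μ ≤ x - k * μ) :
    P {ω | x ≤ ∑ i ∈ Finset.range (k + 1), X i ω} ≤
      ENNReal.ofReal (B * exp (4 * ε * μ + ε / 2 - ε * μ / 2 / √x * r)) := by
  have hB := h.one_le_expMomentBound hθ.le
  refine (h.measure_le_sum_le hθ (div_nonneg hε (sqrt_nonneg x))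
    ((div_le_self hε (one_le_sqrt.2 hx)).trans hεθ) k x).trans (ENNReal.ofReal_le_ofReal ?_)
  gcongr
  exact chernoff_exponent_le hμ (div_nonneg (by linarith) (sq_nonneg θ)) hε hεA hx rfl hd hk hm hr

end ChernoffAtScale

theorem measure_le_natAbs_renewalCount_sub_floor_le (h : IsDelayedRenewalSequence P X μ θ B)
    (hμ : 0 < μ) (hθ : 0 < θ) {ε : ℝ} (hε : 0 < ε) (hεθ : ε ≤ θ / 2)
    (hεA : ε * (8 * B / θ ^ 2) ≤ μ / 2) {x : ℝ} (hx : 1 ≤ x) (r : ℕ) :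
    P {ω | r ≤ (((renewalCount (fun k => ∑ i ∈ Finset.range k, X i ω) x + 1 : ℕ) : ℤ)
        - ⌊x / μ⌋).natAbs} ≤
      ENNReal.ofReal (2 * B * exp (4 * ε * μ + ε / 2)) *
        ENNReal.ofReal (exp (-(ε * μ / 2 / √x * r))) := by
  have hB := h.one_le_expMomentBound hθ.le
  have hs : 1 ≤ √x := one_le_sqrt.2 hx
  set m := ⌊x / μ⌋₊
  have hfloor : ⌊x / μ⌋ = m := (Int.natCast_floor_eq_floor (by positivity)).symm
  have hmx : m * μ ≤ x := (le_div_iff₀ hμ).1 (Nat.floor_le (by positivity))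
  have hxm : x < (m + 1) * μ := (div_lt_iff₀ hμ).1 (Nat.lt_floor_add_one _)
  set E := 4 * ε * μ + ε / 2 - ε * μ / 2 / √x * r with hE
  have hsplit : ENNReal.ofReal (B * exp E) + ENNReal.ofReal (B * exp E) =
      ENNReal.ofReal (2 * B * exp (4 * ε * μ + ε / 2)) *
        ENNReal.ofReal (exp (-(ε * μ / 2 / √x * r))) := by
    rw [← ENNReal.ofReal_add (by positivity) (by positivity), ← ENNReal.ofReal_mul (by positivity)]
    congr 1
    rw [hE, sub_eq_add_neg, exp_add]
    ring
  rcases lt_or_ge r 3 with hr | hr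
  · refine prob_le_one.trans ?_
    rw [← hsplit, ← ENNReal.ofReal_add (by positivity) (by positivity), ← ENNReal.ofReal_one]
    refine ENNReal.ofReal_le_ofReal ?_
    have hE0 : 0 ≤ E := by
      have hrate : ε * μ / 2 / √x ≤ ε * μ / 2 := div_le_self (by positivity) hs
      have hr3 : (r : ℝ) ≤ 3 := by exact_mod_cast hr.le
      nlinarith [mul_pos hε hμ]
    nlinarith [one_le_exp hE0]
  have hlow : P {ω | ∑ i ∈ Finset.range (m + r - 3 + 1), X i ω ≤ x} ≤
      ENNReal.ofReal (B * exp E) := by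
    have hk : ((m + r - 3 : ℕ) : ℝ) = m + r - 3 := by
      push_cast [Nat.cast_sub (by omega : 3 ≤ m + r)]
      ring
    exact h.measure_sum_le_le_exp_neg_sqrt hμ hθ hε.le hεθ hεA hx (by linarith) hmx
      (Nat.cast_nonneg r) (by rw [hk]; linarith)
  have hup : P {ω | r + 2 ≤ m ∧ x < ∑ i ∈ Finset.range (m - r - 2 + 1), X i ω} ≤
      ENNReal.ofReal (B * exp E) := by
    by_cases hrm : r + 2 ≤ m
    · have hk : ((m - r - 2 : ℕ) : ℝ) = m - r - 2 := by
        rw [Nat.sub_sub, Nat.cast_sub hrm]; push_cast; ring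
      exact (measure_mono fun ω hω => hω.2.le).trans
        (h.measure_le_sum_le_exp_neg_sqrt hμ hθ hε.le hεθ hεA hx (by rw [hk]; linarith) hmx
          (Nat.cast_nonneg r) (by rw [hk]; nlinarith))
    · simp [hrm]
  calc _ ≤ P ({ω | ∑ i ∈ Finset.range (m + r - 3 + 1), X i ω ≤ x} ∪
          {ω | r + 2 ≤ m ∧ x < ∑ i ∈ Finset.range (m - r - 2 + 1), X i ω}) := by
        refine measure_mono fun ω hω => ?_
        rw [mem_ofPred_eq, hfloor] at hω
        rcases le_or_lt_of_le_natAbs_renewalCount_sub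
          (monotone_sum_range_of_nonneg (h.nonneg · ω)) hr hω with hlate | ⟨hrm, hearly⟩
        · exact Or.inl (by rwa [show m + r - 3 + 1 = m + r - 2 by omega])
        · exact Or.inr ⟨hrm, by rwa [show m - r - 2 + 1 = m - r - 1 by omega]⟩
    _ ≤ _ := (measure_union_le _ _).trans ((add_le_add hlow hup).trans hsplit.le)

theorem exists_measure_le_natAbs_renewalCount_sub_floor_le
    (h : IsDelayedRenewalSequence P X μ θ B) (hμ : 0 < μ) (hθ : 0 < θ) :
    ∃ C c : ℝ, 0 ≤ C ∧ 0 < c ∧ ∀ x : ℝ, 1 ≤ x → ∀ r : ℕ,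
      P {ω | r ≤ (((renewalCount (fun k => ∑ i ∈ Finset.range k, X i ω) x + 1 : ℕ) : ℤ)
        - ⌊x / μ⌋).natAbs} ≤ ENNReal.ofReal C * ENNReal.ofReal (exp (-(c / √x * r))) := by
  have hB := h.one_le_expMomentBound hθ.le
  have hA : 0 < 8 * B / θ ^ 2 := by positivity
  set ε := min (θ / 2) (μ / (2 * (8 * B / θ ^ 2)))
  have hεA : ε * (8 * B / θ ^ 2) ≤ μ / 2 :=
    calc ε * (8 * B / θ ^ 2) ≤ μ / (2 * (8 * B / θ ^ 2)) * (8 * B / θ ^ 2) := by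
          gcongr
          exact min_le_right _ _
      _ = μ / 2 := by field_simp
  exact ⟨_, _, by positivity, by positivity, fun x hx r =>
    h.measure_le_natAbs_renewalCount_sub_floor_le hμ hθ (by positivity) (min_le_left _ _) hεA hx r⟩

end IsDelayedRenewalSequence

lemma isDelayedRenewalSequence_natCast {P : Measure Ω} [IsProbabilityMeasure P]
    {Λ : ℕ → Ω → ℕ} (hmeas : ∀ i, Measurable (Λ i)) (hindep : iIndepFun Λ P)
    (hid : ∀ i, 1 ≤ i → IdentDistrib (Λ i) (Λ 1) P P) {μ θ B : ℝ}
    (hμ : ∫ ω, (Λ 1 ω : ℝ) ∂P = μ) (hθ : 0 ≤ θ)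
    (hexp : ∀ i, ∫⁻ ω, ENNReal.ofReal (exp (θ * Λ i ω)) ∂P ≤ ENNReal.ofReal B) :
    IsDelayedRenewalSequence P (fun i ω => (Λ i ω : ℝ)) μ θ B := by
  have hmeasExp : ∀ i, Measurable fun ω => exp (θ * Λ i ω) := fun i => by fun_prop
  have hexp0 : ∀ i, 0 ≤ᵐ[P] fun ω => exp (θ * Λ i ω) := fun i => ae_of_all _ fun ω => (exp_pos _).le
  have hB : 0 ≤ B := by
    have hone : (1 : ℝ≥0∞) ≤ ENNReal.ofReal B :=
      calc 1 = ∫⁻ _, 1 ∂P := by simp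
        _ ≤ ∫⁻ ω, ENNReal.ofReal (exp (θ * Λ 0 ω)) ∂P := lintegral_mono fun ω =>
            ENNReal.one_le_ofReal.2 (one_le_exp (by positivity))
        _ ≤ ENNReal.ofReal B := hexp 0
    linarith [ENNReal.one_le_ofReal.1 hone]
  exact
  { indep := hindep.comp (fun _ n => (n : ℝ)) fun _ => measurable_from_top
    measurable := fun i => measurable_from_top.comp (hmeas i)
    nonneg := fun _ _ => Nat.cast_nonneg _
    integrable_exp := fun i => ⟨(hmeasExp i).aestronglyMeasurable,
      (hasFiniteIntegral_iff_ofReal (hexp0 i)).2 ((hexp i).trans_lt ENNReal.ofReal_lt_top)⟩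
    integral_exp_le := fun i => by
      rw [integral_eq_lintegral_of_nonneg_ae (hexp0 i) (hmeasExp i).aestronglyMeasurable]
      exact ENNReal.toReal_le_of_le_ofReal hB (hexp i)
    integral_succ := fun i =>
      (((hid (i + 1) (Nat.le_add_left 1 i)).comp measurable_from_top).integral_eq).trans hμ }

end DelayedRenewal

-- `Λ i` is the paper's `Λ_{i+1}`.
/-- Moment bounds for the renewal count: let `{Λ_i}_{i≥1}` be nonnegative integer-valued,
`{Λ_i}_{i≥2}` i.i.d. with mean `μ ∈ (0,∞)`, the whole family independent, with a uniform
exponential moment `sup_i E[e^{θΛ_i}] ≤ B < ∞` for some `θ > 0`.  With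
`T_k = Λ_1 + ⋯ + Λ_k` and `K_n = min{k ≥ 1 : T_k > n} + 1`, for every `q ≥ 1` there is a
constant `C_q` with `E|K_n − ⌊n/μ⌋|^q ≤ C_q n^{q/2}` for all `n ≥ 1`.
(Indices shifted: `Λ i` below denotes the paper's `Λ_{i+1}`, so `Λ 0` is `Λ_1`.) -/
theorem renewal_count_moment
    {Ω : Type*} [MeasurableSpace Ω] (Pr : Measure Ω) [IsProbabilityMeasure Pr]
    (Λ : ℕ → Ω → ℕ) (hmeas : ∀ i, Measurable (Λ i))
    (hindep : iIndepFun Λ Pr)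
    (hid : ∀ i : ℕ, 1 ≤ i → IdentDistrib (Λ i) (Λ 1) Pr Pr)
    (μmean : ℝ) (hμpos : 0 < μmean)
    (hμ : ∫ ω, (Λ 1 ω : ℝ) ∂Pr = μmean)
    (θ B : ℝ) (hθ : 0 < θ)
    (hexp : ∀ i, ∫⁻ ω, ENNReal.ofReal (Real.exp (θ * Λ i ω)) ∂Pr ≤ ENNReal.ofReal B) :
    ∀ q : ℝ, 1 ≤ q → ∃ C : ℝ, ∀ n : ℕ, 1 ≤ n →
      ∫⁻ ω, ((((sInf {k : ℕ | 1 ≤ k ∧ n < ∑ i ∈ Finset.range k, Λ i ω} + 1 : ℕ) : ℤ)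
              - Int.floor ((n : ℝ) / μmean)).natAbs : ℝ≥0∞) ^ q ∂Pr
        ≤ ENNReal.ofReal (C * (n : ℝ) ^ (q / 2)) := by
  intro q hq
  obtain ⟨C, c, hC, hc, htail⟩ := (isDelayedRenewalSequence_natCast hmeas hindep hid hμ hθ.le
    hexp).exists_measure_le_natAbs_renewalCount_sub_floor_le hμpos hθ
  refine ⟨C * Gamma (q + 1) / c ^ q, fun n hn => ?_⟩
  have hcount : ∀ ω, sInf {k : ℕ | 1 ≤ k ∧ n < ∑ i ∈ Finset.range k, Λ i ω} =
      renewalCount (fun k => ∑ i ∈ Finset.range k, (Λ i ω : ℝ)) n := fun ω => by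
    simp only [renewalCount, ← Nat.cast_sum, Nat.cast_lt]
  have hn' : (1 : ℝ) ≤ n := by exact_mod_cast hn
  simp_rw [hcount]
  calc _ ≤ ENNReal.ofReal C * ENNReal.ofReal (Gamma (q + 1) / (c / √n) ^ q) :=
        lintegral_natCast_rpow_le_of_meas_le_exp (by fun_prop) (by positivity) (by positivity)
          (htail n hn')
    _ = ENNReal.ofReal (C * Gamma (q + 1) / c ^ q * (n : ℝ) ^ (q / 2)) := by
        rw [← ENNReal.ofReal_mul hC, div_rpow hc.le (sqrt_nonneg _), sqrt_eq_rpow,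
          ← rpow_mul (Nat.cast_nonneg _)]
        congr 1
        field_simp
end
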